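/- For real a and real parameters α > 0 and β with α - β > -1, the Laplace transform of t ↦ t^{α-β} E_{α, α-β+1}(-a t^α) at s > 0 with s^α > |a| equals s^{β-1}/(a + s^α). Equivalently, ∫_0^∞ e^{-st} t^{α-β} E_{α,α-β+1}(-a t^α) dt = s^{β-1}/(s^α + a). -/

import Mathlib

open MeasureTheory

/-- The real two-parameter Mittag-Leffler function `E_{μ,γ}(x) = ∑_k x^k / Γ(γ + μ k)`. -/
noncomputable def mittagLeffler (μ γ x : ℝ) : ℝ :=
  ∑' k : ℕ, x ^ k / Real.Gamma (γ + μ * k)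

/-!
Expand `E_{α,α-β+1}` into its power series: the integrand becomes `e^(-st) ∑ c_k t^(ρ_k - 1)` with
`ρ_k = α - β + 1 + α k` and `c_k = (-a)^k / Γ(ρ_k)`. Each term has Laplace transform
`c_k Γ(ρ_k) / s^ρ_k = (-a)^k / s^ρ_k`, a geometric series with ratio `-a / s^α`, which converges
absolutely because `|a| < s^α`; absolute convergence is what allows integrating term by term.
-/

open Real Set

lemma integral_rpow_sub_one_mul_exp_neg_mul_Ioi {ρ s : ℝ} (hρ : 0 < ρ) (hs : 0 < s) :
    ∫ t in Ioi 0, t ^ (ρ - 1) * exp (-(s * t)) = Gamma ρ / s ^ ρ := by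
  rw [integral_rpow_mul_exp_neg_mul_Ioi hρ hs, one_div, inv_rpow hs.le, inv_mul_eq_div]

theorem hasSum_integral_exp_neg_mul_tsum_rpow {c ρ : ℕ → ℝ} {s : ℝ} (hρ : ∀ k, 0 < ρ k)
    (hs : 0 < s) (hsum : Summable fun k => c k * (Gamma (ρ k) / s ^ ρ k)) :
    HasSum (fun k => c k * (Gamma (ρ k) / s ^ ρ k))
      (∫ t in Ioi 0, exp (-(s * t)) * ∑' k, c k * t ^ (ρ k - 1)) := by
  set F : ℕ → ℝ → ℝ := fun k t => c k * (t ^ (ρ k - 1) * exp (-(s * t)))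
  have hF_int : ∀ k, IntegrableOn (F k) (Ioi 0) := fun k => by
    have := integrableOn_rpow_mul_exp_neg_mul_rpow (s := ρ k - 1) (by linarith [hρ k])
      zero_lt_one hs
    simp only [rpow_one, neg_mul] at this
    exact this.const_mul (c k)
  have hF_val : ∀ k, ∫ t in Ioi 0, F k t = c k * (Gamma (ρ k) / s ^ ρ k) := fun k => by
    rw [integral_const_mul, integral_rpow_sub_one_mul_exp_neg_mul_Ioi (hρ k) hs]
  have hF_norm : ∀ k, ∫ t in Ioi 0, ‖F k t‖ = |c k * (Gamma (ρ k) / s ^ ρ k)| := fun k => by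
    have hpos : 0 < Gamma (ρ k) / s ^ ρ k :=
      div_pos (Gamma_pos_of_pos (hρ k)) (rpow_pos_of_pos hs _)
    rw [abs_mul, abs_of_pos hpos, ← integral_rpow_sub_one_mul_exp_neg_mul_Ioi (hρ k) hs,
      ← integral_const_mul]
    refine setIntegral_congr_fun measurableSet_Ioi fun t ht => ?_
    rw [norm_mul, Real.norm_eq_abs, Real.norm_of_nonneg (by have := ht.out.le; positivity)]
  have hseries : ∀ t, exp (-(s * t)) * ∑' k, c k * t ^ (ρ k - 1) = ∑' k, F k t := fun t => by
    rw [← tsum_mul_left]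
    exact tsum_congr fun k => by ring
  simpa only [hF_val, hseries] using
    hasSum_integral_of_summable_integral_norm hF_int (by simpa only [hF_norm] using hsum.abs)

lemma hasSum_pow_div_rpow_add_mul {x q α s : ℝ} (hs : 0 < s) (hx : |x| < s ^ α) :
    HasSum (fun k : ℕ => x ^ k / s ^ (q + α * k)) (s ^ (α - q) / (s ^ α - x)) := by
  have hsα : 0 < s ^ α := rpow_pos_of_pos hs α
  have hr : |x / s ^ α| < 1 := by rwa [abs_div, abs_of_pos hsα, div_lt_one hsα]
  have hterm : ∀ k : ℕ, x ^ k / s ^ (q + α * k) = (x / s ^ α) ^ k / s ^ q := fun k => by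
    rw [rpow_add hs, rpow_mul_natCast hs.le, div_pow]; field_simp
  have hsum : (1 - x / s ^ α)⁻¹ / s ^ q = s ^ (α - q) / (s ^ α - x) := by
    have : s ^ α - x ≠ 0 := by linarith [le_abs_self x]
    rw [rpow_sub hs]; field_simp
  simpa only [hterm, hsum] using (hasSum_geometric_of_abs_lt_one hr).div_const (s ^ q)

lemma rpow_mul_mittagLeffler_neg_mul_rpow {t : ℝ} (ht : 0 < t) (a α q : ℝ) :
    t ^ q * mittagLeffler α (q + 1) (-(a * t ^ α)) =
      ∑' k : ℕ, (-a) ^ k / Gamma (q + 1 + α * k) * t ^ (q + 1 + α * k - 1) := by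
  rw [mittagLeffler, ← tsum_mul_left]
  refine tsum_congr fun k => ?_
  rw [neg_mul_eq_neg_mul, mul_pow, ← rpow_mul_natCast ht.le,
    show q + 1 + α * k - 1 = q + α * k by ring, rpow_add ht]
  ring

/-- For real `a`, `α > 0`, `α - β > -1`, `s > 0` with `s^α > |a|`, the Laplace transform of
`t ↦ t^{α-β} E_{α,α-β+1}(-a t^α)` at `s` equals `s^{β-1}/(s^α + a)`. -/
theorem laplace_mittagLeffler (a α β s : ℝ) (hα : 0 < α) (hβ : -1 < α - β)
    (hs : 0 < s) (ha : |a| < s ^ α) :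
    ∫ t in Set.Ioi (0 : ℝ),
        Real.exp (-(s * t)) * t ^ (α - β) * mittagLeffler α (α - β + 1) (-(a * t ^ α))
      = s ^ (β - 1) / (s ^ α + a) := by
  set ρ : ℕ → ℝ := fun k => α - β + 1 + α * k
  have hρ : ∀ k, 0 < ρ k := fun k => by
    have : 0 ≤ α * k := by positivity
    linarith
  have hgeom : HasSum (fun k => (-a) ^ k / Gamma (ρ k) * (Gamma (ρ k) / s ^ ρ k))
      (s ^ (β - 1) / (s ^ α + a)) := by
    convert hasSum_pow_div_rpow_add_mul (q := α - β + 1) hs (x := -a) (by rwa [abs_neg]) using 1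
    · exact funext fun k => div_mul_div_cancel₀ (Gamma_pos_of_pos (hρ k)).ne'
    · rw [sub_neg_eq_add, show α - (α - β + 1) = β - 1 by ring]
  refine Eq.trans ?_ ((hasSum_integral_exp_neg_mul_tsum_rpow hρ hs hgeom.summable).unique hgeom)
  refine setIntegral_congr_fun measurableSet_Ioi fun t ht => ?_
  rw [mul_assoc, rpow_mul_mittagLeffler_neg_mul_rpow ht]
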